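/- arXiv:2102.05836 — 2 statements merged into one kernel-verified Lean document; each statement's English description precedes it below -/
import Mathlib

section
/- If d_φ is a Bregman divergence and X is an integrable random variable with values in a convex set S with E[X] in the relative interior of S, then E[d_φ(X, s)] - E[d_φ(X, E[X])] = d_φ(E[X], s) for all s, and hence μ = E[X] is the unique minimizer of s ↦ E[d_φ(X, s)]. -/
/-!
Integrating `d_φ(X, s) = φ(X) - φ(s) - ⟪∇φ(s), X - s⟫` term by term gives
`E[d_φ(X, s)] = E[φ(X)] - φ(s) - ⟪∇φ(s), E[X] - s⟫`, in which `X` enters only through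
`E[φ(X)]` and `E[X]`; subtracting the value at `s = E[X]` leaves exactly `d_φ(E[X], s)`.
Strict convexity makes `d_φ(x, s) > 0` for `x ≠ s` (the strict first-order condition, read off
from the restriction of `φ` to the segment from `s` to `x`), so `E[X]` is the unique minimiser.
-/

open scoped InnerProductSpace
open MeasureTheory

section LineMap

open AffineMap

variable {E : Type*} [NormedAddCommGroup E] [NormedSpace ℝ E] {S : Set E} {f : E → ℝ} {x y : E}

theorem StrictConvexOn.comp_lineMap (hf : StrictConvexOn ℝ S f) (hx : x ∈ S) (hy : y ∈ S)
    (hxy : x ≠ y) : StrictConvexOn ℝ (Set.Icc 0 1) (f ∘ lineMap (k := ℝ) x y) := by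
  refine ⟨convex_Icc 0 1, fun t₁ ht₁ t₂ ht₂ ht a b ha hb hab => ?_⟩
  simp only [Function.comp_apply, Convex.combo_affine_apply hab]
  exact hf.2 (hf.1.lineMap_mem hx hy ht₁) (hf.1.lineMap_mem hx hy ht₂)
    ((lineMap_injective ℝ hxy).ne ht) ha hb hab

theorem StrictConvexOn.add_apply_sub_lt {f' : E →L[ℝ] ℝ} (hf : StrictConvexOn ℝ S f)
    (hf' : HasFDerivAt f f' x) (hx : x ∈ S) (hy : y ∈ S) (hxy : x ≠ y) :
    f x + f' (y - x) < f y := by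
  have hline : HasDerivAt (f ∘ lineMap (k := ℝ) x y) (f' (y - x)) 0 := by
    rw [← lineMap_apply_zero (k := ℝ) x y] at hf'
    exact hf'.comp_hasDerivAt 0 hasDerivAt_lineMap
  have hslope :=
    (hf.comp_lineMap hx hy hxy).lt_slope_of_hasDerivAt (by simp) (by simp) one_pos hline
  rw [slope_def_field] at hslope
  simp only [Function.comp_apply, lineMap_apply_zero, lineMap_apply_one, sub_zero,
    div_one] at hslope
  linarith

end LineMap

section Bregman

variable {E : Type*} [NormedAddCommGroup E] [InnerProductSpace ℝ E] [CompleteSpace E]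

noncomputable def bregmanDiv (φ : E → ℝ) (x s : E) : ℝ := φ x - φ s - ⟪gradient φ s, x - s⟫_ℝ

theorem bregmanDiv_pos {S : Set E} {φ : E → ℝ} (hφ : StrictConvexOn ℝ S φ) {x s : E}
    (hs : DifferentiableAt ℝ φ s) (hxS : x ∈ S) (hsS : s ∈ S) (hxs : x ≠ s) :
    0 < bregmanDiv φ x s := by
  have hgrad := hφ.add_apply_sub_lt hs.hasGradientAt.hasFDerivAt hsS hxS hxs.symm
  rw [InnerProductSpace.toDual_apply_apply] at hgrad
  rw [bregmanDiv]
  linarith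

variable {Ω : Type*} [MeasurableSpace Ω] {μ : Measure Ω} [IsProbabilityMeasure μ]
  {φ : E → ℝ} {X : Ω → E}

theorem integral_bregmanDiv (hX : Integrable X μ) (hφX : Integrable (fun ω => φ (X ω)) μ)
    (s : E) : ∫ ω, bregmanDiv φ (X ω) s ∂μ
      = ∫ ω, φ (X ω) ∂μ - φ s - ⟪gradient φ s, ∫ ω, X ω ∂μ - s⟫_ℝ := by
  have hφXs : Integrable (fun ω => φ (X ω) - φ s) μ := hφX.sub (integrable_const _)
  have hXs : Integrable (fun ω => X ω - s) μ := hX.sub (integrable_const s)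
  simp only [bregmanDiv]
  rw [integral_sub hφXs (hXs.const_inner _), integral_sub hφX (integrable_const _),
    integral_inner hXs, integral_sub hX (integrable_const s)]
  simp

theorem integral_bregmanDiv_sub_integral_bregmanDiv_integral (hX : Integrable X μ)
    (hφX : Integrable (fun ω => φ (X ω)) μ) (s : E) :
    ∫ ω, bregmanDiv φ (X ω) s ∂μ - ∫ ω, bregmanDiv φ (X ω) (∫ ω, X ω ∂μ) ∂μ
      = bregmanDiv φ (∫ ω, X ω ∂μ) s := by
  rw [integral_bregmanDiv hX hφX, integral_bregmanDiv hX hφX, bregmanDiv, sub_self,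
    inner_zero_right]
  ring

end Bregman

theorem bregman_centroid_general {d : ℕ} {Ω : Type*} [MeasureSpace Ω]
    [IsProbabilityMeasure (volume : Measure Ω)]
    (S : Set (EuclideanSpace ℝ (Fin d)))
    (φ : EuclideanSpace ℝ (Fin d) → ℝ)
    (hconv : StrictConvexOn ℝ S φ) (hdiff : Differentiable ℝ φ)
    (dφ : EuclideanSpace ℝ (Fin d) → EuclideanSpace ℝ (Fin d) → ℝ)
    (hdφ : ∀ x s, dφ x s = φ x - φ s - ⟪gradient φ s, x - s⟫_ℝ)
    (X : Ω → EuclideanSpace ℝ (Fin d))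
    (hXint : Integrable X) (hφXint : Integrable (fun ω => φ (X ω)))
    (hmean : (∫ ω, X ω) ∈ intrinsicInterior ℝ S) :
    (∀ s ∈ intrinsicInterior ℝ S,
        (∫ ω, dφ (X ω) s) - (∫ ω, dφ (X ω) (∫ ω, X ω)) = dφ (∫ ω, X ω) s)
    ∧ (∀ s ∈ intrinsicInterior ℝ S, s ≠ (∫ ω, X ω) →
        (∫ ω, dφ (X ω) (∫ ω, X ω)) < ∫ ω, dφ (X ω) s) := by
  obtain rfl : dφ = bregmanDiv φ := funext₂ hdφ
  have hgap := integral_bregmanDiv_sub_integral_bregmanDiv_integral hXint hφXint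
  refine ⟨fun s _ => hgap s, fun s hs hne => ?_⟩
  have hpos := bregmanDiv_pos hconv (hdiff s) (intrinsicInterior_subset hmean)
    (intrinsicInterior_subset hs) hne.symm
  linarith [hgap s]

/-- For a Bregman divergence `d_φ` and an integrable `S`-valued random variable `X` with
`E[X]` in the relative (intrinsic) interior of `S`,
`E[d_φ(X,s)] - E[d_φ(X,E[X])] = d_φ(E[X],s)`, and hence `E[X]` is the unique minimizer
of `s ↦ E[d_φ(X,s)]` over the relative interior of `S`. -/
theorem bregman_centroid {d : ℕ} {Ω : Type*} [MeasureSpace Ω]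
    [IsProbabilityMeasure (volume : Measure Ω)]
    (S : Set (EuclideanSpace ℝ (Fin d))) (hS : Convex ℝ S)
    (φ : EuclideanSpace ℝ (Fin d) → ℝ)
    (hconv : StrictConvexOn ℝ S φ) (hdiff : Differentiable ℝ φ)
    (dφ : EuclideanSpace ℝ (Fin d) → EuclideanSpace ℝ (Fin d) → ℝ)
    (hdφ : ∀ x s, dφ x s = φ x - φ s - ⟪gradient φ s, x - s⟫_ℝ)
    (X : Ω → EuclideanSpace ℝ (Fin d)) (hXS : ∀ ω, X ω ∈ S)
    (hXint : Integrable X) (hφXint : Integrable (fun ω => φ (X ω)))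
    (hdint : ∀ s ∈ intrinsicInterior ℝ S, Integrable (fun ω => dφ (X ω) s))
    (hmean : (∫ ω, X ω) ∈ intrinsicInterior ℝ S) :
    (∀ s ∈ intrinsicInterior ℝ S,
        (∫ ω, dφ (X ω) s) - (∫ ω, dφ (X ω) (∫ ω, X ω)) = dφ (∫ ω, X ω) s)
    ∧ (∀ s ∈ intrinsicInterior ℝ S, s ≠ (∫ ω, X ω) →
        (∫ ω, dφ (X ω) (∫ ω, X ω)) < ∫ ω, dφ (X ω) s) :=
  bregman_centroid_general S φ hconv hdiff dφ hdφ X hXint hφXint hmean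
end

section
/- Let ρₙ₊₁ = ρₙ + αₙ(aₙ - ρₙ) where aₙ are i.i.d. bounded random variables with mean a, and the stepsizes satisfy αₙ > 0, Σₙ αₙ = ∞, Σₙ αₙ² < ∞. Then ρₙ converges to a almost surely. -/
open MeasureTheory ProbabilityTheory Filter Topology Finset

/-!
The noise `∑ αₖ (aₖ - ā)` has independent centred increments whose variances sum to at most
`C² ∑ αₖ²`, so its partial sums form an L²-bounded martingale and converge almost surely.
On such a path, with `Tₙ` the remainder of the noise series, `uₙ = ρₙ - ā + Tₙ` obeys the
deterministic relaxation `uₙ₊₁ = (1 - αₙ) uₙ + αₙ Tₙ`; as `Tₙ → 0` and `∏ (1 - αₖ) → 0` when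
`∑ αₖ = ∞`, it follows that `uₙ → 0`, i.e. `ρₙ → ā`.
-/

theorem tendsto_prod_one_sub_of_not_summable {β : ℕ → ℝ} (h0 : ∀ n, 0 ≤ β n)
    (h1 : ∀ n, β n ≤ 1) (hdiv : ¬ Summable β) :
    Tendsto (fun m => ∏ k ∈ range m, (1 - β k)) atTop (𝓝 0) := by
  have hexp : Tendsto (fun m => Real.exp (-∑ k ∈ range m, β k)) atTop (𝓝 0) :=
    Real.tendsto_exp_atBot.comp <| tendsto_neg_atTop_atBot.comp <|
      (not_summable_iff_tendsto_nat_atTop_of_nonneg h0).1 hdiv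
  refine squeeze_zero (fun m => prod_nonneg fun k _ => sub_nonneg.2 (h1 k)) (fun m => ?_) hexp
  rw [← sum_neg_distrib, Real.exp_sum]
  exact prod_le_prod (fun k _ => sub_nonneg.2 (h1 k)) fun k _ => Real.one_sub_le_exp_neg (β k)

theorem abs_le_add_prod_mul_of_relaxation {α c v : ℕ → ℝ} {δ : ℝ} (hα0 : ∀ n, 0 ≤ α n)
    (hα1 : ∀ n, α n ≤ 1) (hc : ∀ n, |c n| ≤ δ)
    (hv : ∀ n, v (n + 1) = (1 - α n) * v n + α n * c n) (m : ℕ) :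
    |v m| ≤ δ + (∏ k ∈ range m, (1 - α k)) * |v 0| := by
  induction m with
  | zero => simpa using (abs_nonneg (c 0)).trans (hc 0)
  | succ m ih =>
    have h1α : 0 ≤ 1 - α m := sub_nonneg.2 (hα1 m)
    calc |v (m + 1)| ≤ |(1 - α m) * v m| + |α m * c m| := hv m ▸ abs_add_le _ _
      _ = (1 - α m) * |v m| + α m * |c m| := by
          rw [abs_mul, abs_mul, abs_of_nonneg h1α, abs_of_nonneg (hα0 m)]
      _ ≤ (1 - α m) * (δ + (∏ k ∈ range m, (1 - α k)) * |v 0|) + α m * δ := by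
          gcongr
          · exact hα0 m
          · exact hc m
      _ = δ + (∏ k ∈ range (m + 1), (1 - α k)) * |v 0| := by rw [prod_range_succ]; ring

theorem tendsto_zero_of_relaxation {α c v : ℕ → ℝ} (hα0 : ∀ n, 0 ≤ α n)
    (hα1 : ∀ᶠ n in atTop, α n ≤ 1) (hαdiv : ¬ Summable α) (hc : Tendsto c atTop (𝓝 0))
    (hv : ∀ n, v (n + 1) = (1 - α n) * v n + α n * c n) :
    Tendsto v atTop (𝓝 0) := by
  refine Metric.tendsto_atTop.2 fun ε hε => ?_
  obtain ⟨N, hN⟩ := eventually_atTop.1 (hα1.and (Metric.tendsto_nhds.1 hc (ε / 2) (half_pos hε)))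
  have hα1' : ∀ k, α (N + k) ≤ 1 := fun k => (hN (N + k) (N.le_add_right k)).1
  have hc' : ∀ k, |c (N + k)| ≤ ε / 2 := fun k =>
    (Real.dist_0_eq_abs _ ▸ (hN (N + k) (N.le_add_right k)).2).le
  have hdiv' : ¬ Summable fun k => α (N + k) := by
    simpa only [add_comm N, summable_nat_add_iff] using hαdiv
  have htail : Tendsto (fun m => (∏ k ∈ range m, (1 - α (N + k))) * |v N|) atTop (𝓝 0) := by
    simpa using (tendsto_prod_one_sub_of_not_summable (fun k => hα0 _) hα1' hdiv').mul_const |v N|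
  obtain ⟨M, hM⟩ := eventually_atTop.1 (htail.eventually (gt_mem_nhds (half_pos hε)))
  refine ⟨N + M, fun n hn => ?_⟩
  obtain ⟨m, rfl⟩ := Nat.exists_eq_add_of_le (le_of_add_le_left hn)
  rw [Real.dist_0_eq_abs]
  calc |v (N + m)| ≤ ε / 2 + (∏ k ∈ range m, (1 - α (N + k))) * |v N| :=
        abs_le_add_prod_mul_of_relaxation (v := fun k => v (N + k)) (fun k => hα0 _) hα1' hc'
          (fun k => hv (N + k)) m
    _ < ε / 2 + ε / 2 := by gcongr; exact hM m (by omega)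
    _ = ε := add_halves ε

theorem tendsto_of_recursion_of_tendsto_sum {α x ρ : ℕ → ℝ} {c L : ℝ} (hα0 : ∀ n, 0 ≤ α n)
    (hα1 : ∀ᶠ n in atTop, α n ≤ 1) (hαdiv : ¬ Summable α)
    (hρ : ∀ n, ρ (n + 1) = ρ n + α n * (x n - ρ n))
    (hsum : Tendsto (fun n => ∑ k ∈ range n, α k * (x k - c)) atTop (𝓝 L)) :
    Tendsto ρ atTop (𝓝 c) := by
  set T := fun n => L - ∑ k ∈ range n, α k * (x k - c)
  have hT : Tendsto T atTop (𝓝 0) := by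
    simpa using (tendsto_const_nhds (x := L)).sub hsum
  have hu : Tendsto (fun n => ρ n - c + T n) atTop (𝓝 0) :=
    tendsto_zero_of_relaxation hα0 hα1 hαdiv hT fun n => by
      simp only [T, hρ, sum_range_succ]; ring
  simpa using (hu.sub hT).add_const c

namespace ProbabilityTheory

variable {Ω : Type*} {mΩ : MeasurableSpace Ω} {μ : Measure Ω}

theorem sq_integral_abs_le_integral_sq [IsProbabilityMeasure μ] {Y : Ω → ℝ}
    (hY : MemLp Y 2 μ) : (∫ ω, |Y ω| ∂μ) ^ 2 ≤ ∫ ω, Y ω ^ 2 ∂μ := by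
  have := variance_nonneg |Y| μ
  rw [variance_eq_sub hY.abs] at this
  simpa [sq_abs] using this

variable {X : ℕ → Ω → ℝ}

theorem iIndepFun.martingale_sum_range_succ (hX : ∀ n, StronglyMeasurable (X n))
    (hindep : iIndepFun X μ) (hint : ∀ n, Integrable (X n) μ) (hmean : ∀ n, μ[X n] = 0) :
    Martingale (fun n => ∑ k ∈ range (n + 1), X k) (Filtration.natural X hX) μ := by
  have := hindep.isProbabilityMeasure
  refine martingale_of_condExp_sub_eq_zero_nat (fun n => ?_)
    (fun n => integrable_finsetSum' _ fun k _ => hint k) fun n => ?_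
  · refine Finset.stronglyMeasurable_sum _ fun k hk => ?_
    exact (Filtration.stronglyAdapted_natural hX k).mono
      (Filtration.mono _ (Nat.lt_succ_iff.1 (mem_range.1 hk)))
  · rw [sum_range_succ _ (n + 1), add_sub_cancel_left]
    filter_upwards [hindep.condExp_natural_ae_eq_of_lt hX n.lt_succ_self] with ω h
    rw [h, hmean]
    rfl

theorem iIndepFun.ae_tendsto_sum_range_of_summable_variance (hX : ∀ n, Measurable (X n))
    (hindep : iIndepFun X μ) (hL2 : ∀ n, MemLp (X n) 2 μ) (hmean : ∀ n, μ[X n] = 0)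
    (hvar : Summable fun n => Var[X n; μ]) :
    ∀ᵐ ω ∂μ, ∃ L, Tendsto (fun n => ∑ k ∈ range n, X k ω) atTop (𝓝 L) := by
  have := hindep.isProbabilityMeasure
  set S := fun n => ∑ k ∈ range (n + 1), X k
  have hS : ∀ n, MemLp (S n) 2 μ := fun n => memLp_finsetSum' _ fun k _ => hL2 k
  have hSmean : ∀ n, μ[S n] = 0 := fun n => by
    simp only [S, Finset.sum_apply]
    rw [integral_finsetSum _ fun k _ => (hL2 k).integrable one_le_two]
    exact sum_eq_zero fun k _ => hmean k
  have hSsq : ∀ n, ∫ ω, S n ω ^ 2 ∂μ ≤ ∑' k, Var[X k; μ] := fun n => calc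
    ∫ ω, S n ω ^ 2 ∂μ = Var[S n; μ] :=
      (variance_of_integral_eq_zero (hS n).aemeasurable (hSmean n)).symm
    _ = ∑ k ∈ range (n + 1), Var[X k; μ] :=
      IndepFun.variance_sum (fun k _ => hL2 k) fun i _ j _ hij => hindep.indepFun hij
    _ ≤ ∑' k, Var[X k; μ] := hvar.sum_le_tsum _ fun k _ => variance_nonneg _ _
  have hL1 : ∀ n, eLpNorm (S n) 1 μ ≤ ENNReal.ofReal √(∑' k, Var[X k; μ]) := fun n => by
    rw [eLpNorm_one_eq_lintegral_enorm,
      ← ofReal_integral_norm_eq_lintegral_enorm ((hS n).integrable one_le_two)]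
    exact ENNReal.ofReal_le_ofReal <| Real.le_sqrt_of_sq_le <|
      (sq_integral_abs_le_integral_sq (hS n)).trans (hSsq n)
  have hmart := hindep.martingale_sum_range_succ (fun n => (hX n).stronglyMeasurable)
    (fun n => (hL2 n).integrable one_le_two) hmean
  filter_upwards [hmart.submartingale.exists_ae_tendsto_of_bdd hL1] with ω ⟨L, hL⟩
  exact ⟨L, (tendsto_add_atTop_iff_nat 1).1 (by simpa [S] using hL)⟩

end ProbabilityTheory

theorem stochastic_approximation_mean_general {Ω : Type*} [MeasureSpace Ω]
    [IsProbabilityMeasure (volume : Measure Ω)]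
    (a : ℕ → Ω → ℝ) (hmeas : ∀ n, Measurable (a n))
    (hindep : iIndepFun a)
    (C : ℝ) (hbdd : ∀ n, ∀ᵐ ω, |a n ω| ≤ C)
    (abar : ℝ) (hmean : ∀ n, (∫ ω, a n ω) = abar)
    (α : ℕ → ℝ) (hαpos : ∀ n, 0 < α n)
    (hαdiv : ¬ Summable α) (hαsq : Summable (fun n => (α n) ^ 2))
    (ρ : ℕ → Ω → ℝ)
    (hρ : ∀ n ω, ρ (n + 1) ω = ρ n ω + α n * (a n ω - ρ n ω)) :
    ∀ᵐ ω, Tendsto (fun n => ρ n ω) atTop (nhds abar) := by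
  set X : ℕ → Ω → ℝ := fun k ω => α k * (a k ω - abar)
  have ha : ∀ k, MemLp (a k) 2 := fun k =>
    MemLp.of_bound (hmeas k).aestronglyMeasurable C (by simpa using hbdd k)
  have hvar : ∀ k, Var[X k; volume] ≤ α k ^ 2 * C ^ 2 := fun k => by
    rw [variance_const_mul, variance_sub_const (hmeas k).aestronglyMeasurable]
    have hIcc : ∀ᵐ ω, a k ω ∈ Set.Icc (-C) C := by
      filter_upwards [hbdd k] with ω h using abs_le.1 h
    gcongr
    exact (variance_le_sq_of_bounded hIcc (hmeas k).aemeasurable).trans_eq (by ring)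
  have hnoise := iIndepFun.ae_tendsto_sum_range_of_summable_variance (X := X)
    (fun k => ((hmeas k).sub_const abar).const_mul (α k))
    (hindep.comp _ fun k => (measurable_id.sub_const abar).const_mul (α k))
    (fun k => ((ha k).sub (memLp_const abar)).const_mul (α k))
    (fun k => by
      rw [integral_const_mul, integral_sub ((ha k).integrable one_le_two) (integrable_const abar),
        hmean, integral_const, probReal_univ, one_smul, sub_self, mul_zero])
    ((hαsq.mul_right (C ^ 2)).of_nonneg_of_le (fun k => variance_nonneg _ _) hvar)
  have hα1 : ∀ᶠ n in atTop, α n ≤ 1 :=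
    (hαsq.tendsto_atTop_zero.eventually (gt_mem_nhds one_pos)).mono fun n h =>
      (le_abs_self _).trans ((sq_lt_one_iff_abs_lt_one _).1 h).le
  filter_upwards [hnoise] with ω ⟨L, hL⟩
  exact tendsto_of_recursion_of_tendsto_sum (fun n => (hαpos n).le) hα1 hαdiv (hρ · ω) hL

/-- Stochastic approximation of the mean: under the Robbins–Monro stepsize conditions,
the recursion `ρ_{n+1} = ρ_n + α_n (a_n - ρ_n)` driven by i.i.d. bounded random variables
with mean `a` converges to `a` almost surely. -/
theorem stochastic_approximation_mean {Ω : Type*} [MeasureSpace Ω]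
    [IsProbabilityMeasure (volume : Measure Ω)]
    (a : ℕ → Ω → ℝ) (hmeas : ∀ n, Measurable (a n))
    (hindep : iIndepFun a)
    (hident : ∀ n, IdentDistrib (a n) (a 0))
    (C : ℝ) (hbdd : ∀ n, ∀ᵐ ω, |a n ω| ≤ C)
    (abar : ℝ) (hmean : ∀ n, (∫ ω, a n ω) = abar)
    (α : ℕ → ℝ) (hαpos : ∀ n, 0 < α n)
    (hαdiv : ¬ Summable α) (hαsq : Summable (fun n => (α n) ^ 2))
    (ρ₀ : ℝ) (ρ : ℕ → Ω → ℝ)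
    (hρ0 : ∀ ω, ρ 0 ω = ρ₀)
    (hρ : ∀ n ω, ρ (n + 1) ω = ρ n ω + α n * (a n ω - ρ n ω)) :
    ∀ᵐ ω, Tendsto (fun n => ρ n ω) atTop (nhds abar) :=
  stochastic_approximation_mean_general a hmeas hindep C hbdd abar hmean α hαpos hαdiv hαsq ρ hρ
end
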